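/- arXiv:2303.02324 — 6 statements merged into one kernel-verified Lean document; each statement's English description precedes it below -/
import Mathlib

section
/- Let f and g be probability density functions on the real line with f ≺ g in the monotone likelihood ratio (MLR) order, and let φ : ℝ → ℝ be nondecreasing and integrable with respect to both the measure with density f and the measure with density g. Then ∫ φ(x) f(x) dx ≤ ∫ φ(x) g(x) dx. -/
open MeasureTheory

/-- **MLR order implies dominance of expectations of nondecreasing functions.**
If `f ≺ g` in the MLR order and `φ` is nondecreasing and integrable under both
the density-`f` and density-`g` measures, then `∫ φ f ≤ ∫ φ g`. -/
theorem mlr_implies_monotone_expectation_dominance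
    (f g : ℝ → ℝ) (φ : ℝ → ℝ)
    (hf_meas : Measurable f) (hg_meas : Measurable g)
    (hf_nonneg : ∀ x, 0 ≤ f x) (hg_nonneg : ∀ x, 0 ≤ g x)
    (hf_int : ∫ x, f x = 1) (hg_int : ∫ x, g x = 1)
    (hMLR : ∀ x y, x ≤ y → f y * g x ≤ f x * g y)
    (hφ_mono : Monotone φ)
    (hφf_int : Integrable (fun x => φ x * f x))
    (hφg_int : Integrable (fun x => φ x * g x)) :
    ∫ x, φ x * f x ≤ ∫ x, φ x * g x := by
  -- integrability of f and g
  have hfI : Integrable f := by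
    by_contra h
    rw [integral_undef h] at hf_int
    norm_num at hf_int
  have hgI : Integrable g := by
    by_contra h
    rw [integral_undef h] at hg_int
    norm_num at hg_int
  -- helper : if h ≤ k pointwise and integrals equal, then φ*h = φ*k a.e.
  have key_ae : ∀ (h k : ℝ → ℝ), Integrable h → Integrable k → (∀ x, h x ≤ k x) →
      (∫ x, h x) = (∫ x, k x) → (fun x => φ x * h x) =ᵐ[volume] (fun x => φ x * k x) := by
    intro h k hh hk hle hint
    have hsub : Integrable (fun x => k x - h x) := hk.sub hh
    have h0 : (∫ x, k x - h x) = 0 := by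
      rw [integral_sub hk hh, hint, sub_self]
    have hae := (integral_eq_zero_iff_of_nonneg (fun x => sub_nonneg.2 (hle x)) hsub).1 h0
    filter_upwards [hae] with x hx
    have hx' : k x = h x := by
      have : k x - h x = 0 := hx
      linarith
    rw [hx']
  by_cases hAne : ∃ a, f a < g a
  · by_cases hBne : ∃ b, g b < f b
    · -- main case: crossing point exists
      obtain ⟨a0, ha0⟩ := hAne
      obtain ⟨b0, hb0⟩ := hBne
      -- every point where g < f lies strictly left of every point where f < g
      have hlt : ∀ ⦃x a : ℝ⦄, g x < f x → f a < g a → x < a := by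
        intro x a hx ha
        by_contra h
        have hax : a ≤ x := le_of_not_gt h
        have hmlr := hMLR a x hax
        have hfx : 0 < f x := lt_of_le_of_lt (hg_nonneg x) hx
        have hga : 0 < g a := lt_of_le_of_lt (hf_nonneg a) ha
        nlinarith [hg_nonneg x, hf_nonneg a]
      set A : Set ℝ := {x | f x < g x} with hA
      have hbdd : BddBelow A := ⟨b0, fun a ha => (hlt hb0 ha).le⟩
      set c := sInf A with hc
      have key : ∀ x, φ c * (g x - f x) ≤ φ x * g x - φ x * f x := by
        intro x
        rw [← mul_sub]
        rcases lt_trichotomy (f x) (g x) with hx | hx | hx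
        · have hcx : c ≤ x := csInf_le hbdd hx
          exact mul_le_mul_of_nonneg_right (hφ_mono hcx) (by linarith)
        · rw [hx, sub_self, mul_zero, mul_zero]
        · have hxc : x ≤ c := le_csInf ⟨a0, ha0⟩ (fun a ha => (hlt hx ha).le)
          exact mul_le_mul_of_nonpos_right (hφ_mono hxc) (by linarith)
      have hint1 : Integrable (fun x => φ c * (g x - f x)) := ((hgI.sub hfI).const_mul _)
      have hint2 : Integrable (fun x => φ x * g x - φ x * f x) := hφg_int.sub hφf_int
      have hmono := integral_mono hint1 hint2 key
      have hleft : (∫ x, φ c * (g x - f x)) = 0 := by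
        rw [integral_const_mul, integral_sub hgI hfI, hg_int, hf_int, sub_self, mul_zero]
      rw [hleft, integral_sub hφg_int hφf_int] at hmono
      linarith
    · -- f ≤ g everywhere
      push_neg at hBne
      have hae := key_ae f g hfI hgI hBne (by rw [hf_int, hg_int])
      exact le_of_eq (integral_congr_ae hae)
  · -- g ≤ f everywhere
    push_neg at hAne
    have hae := key_ae g f hgI hfI hAne (by rw [hf_int, hg_int])
    exact le_of_eq (integral_congr_ae hae).symm
end

section
/- (Cantelli's strong law of large numbers) Let Y_1, Y_2, ... be independent real-valued random variables with finite fourth moments such that E[ |Y_n − E[Y_n]|^4 ] ≤ C for all n ≥ 1, for some constant C < ∞. Then, with S_n = Y_1 + ... + Y_n, we have (S_n − E[S_n]) / n → 0 almost surely as n → ∞. -/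
/-!
After centring, the fourth moment of `S_n = X_1 + ⋯ + X_n` is
`∑ E X_i⁴ + 6 ∑_{i<j} E X_i² E X_j² ≤ 3 C n²`: every other term of the expansion contains some
`X_i` to the first power and vanishes by independence. Hence `∑ E (S_n / n)⁴ ≤ ∑ 3 C / n² < ∞`,
so `∑ (S_n / n)⁴` converges almost surely and in particular `S_n / n → 0` almost surely.
-/

open MeasureTheory Filter ProbabilityTheory Finset Topology

section Moments

variable {Ω : Type*} [MeasurableSpace Ω] {μ : Measure Ω}

lemma memLp_natCast_iff_integrable_pow {f : Ω → ℝ} {p : ℕ} (hf : AEStronglyMeasurable f μ)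
    (hp : p ≠ 0) : MemLp f p μ ↔ Integrable (fun ω => f ω ^ p) μ := by
  rw [← integrable_norm_rpow_iff hf (by exact_mod_cast hp) (by simp),
    ← integrable_norm_iff (f := fun ω => f ω ^ p) (hf.pow p)]
  simp [norm_pow]

lemma MeasureTheory.MemLp.integrable_pow [IsFiniteMeasure μ] {f : Ω → ℝ} {p k : ℕ}
    (hf : MemLp f p μ) (hk : k ≤ p) : Integrable (fun ω => f ω ^ k) μ := by
  refine (integrable_norm_iff (f := fun ω => f ω ^ k) (hf.1.pow k)).1 ?_
  simpa [norm_pow] using (hf.mono_exponent (by exact_mod_cast hk)).integrable_norm_pow'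

lemma ae_tendsto_zero_of_summable_integral_norm_pow {E : Type*} [NormedAddCommGroup E]
    {g : ℕ → Ω → E} {p : ℕ} (hp : p ≠ 0) (hg : ∀ n, Integrable (fun ω => ‖g n ω‖ ^ p) μ)
    (hsum : Summable fun n => ∫ ω, ‖g n ω‖ ^ p ∂μ) :
    ∀ᵐ ω ∂μ, Tendsto (fun n => g n ω) atTop (𝓝 0) := by
  have hlp : ∑' n, eLpNorm (fun ω => ‖g n ω‖ ^ p) 1 μ ≠ ⊤ := by
    simp_rw [eLpNorm_one_eq_lintegral_enorm, ← ofReal_integral_norm_eq_lintegral_enorm (hg _),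
      norm_pow, norm_norm]
    rw [← ENNReal.ofReal_tsum_of_nonneg (fun n => integral_nonneg fun ω => by positivity) hsum]
    exact ENNReal.ofReal_ne_top
  filter_upwards [summable_norm_of_tsum_eLpNorm_ne_top le_rfl (fun n => (hg n).1) hlp] with ω hω
  have hpow : Tendsto (fun n => ‖g n ω‖ ^ p) atTop (𝓝 0) := by
    simpa using hω.tendsto_atTop_zero
  rw [tendsto_zero_iff_norm_tendsto_zero]
  simpa [Real.pow_rpow_inv_natCast (norm_nonneg _) hp, Real.zero_rpow, hp] using
    hpow.rpow_const (p := (p⁻¹ : ℝ)) (Or.inr (by positivity))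

variable [IsProbabilityMeasure μ]

lemma sq_integral_sq_le_integral_pow_four {f : Ω → ℝ} (hf : MemLp f 4 μ) :
    (∫ ω, f ω ^ 2 ∂μ) ^ 2 ≤ ∫ ω, f ω ^ 4 ∂μ := by
  have hf2 : MemLp (fun ω => f ω ^ 2) 2 μ := by
    rw [memLp_two_iff_integrable_sq (f := fun ω => f ω ^ 2) (hf.1.pow 2)]
    simpa [← pow_mul] using hf.integrable_pow le_rfl
  have := variance_nonneg (fun ω => f ω ^ 2) μ
  rw [variance_eq_sub hf2] at this
  simpa [← pow_mul] using this

lemma integral_sq_mul_integral_sq_le {f g : Ω → ℝ} (hf : MemLp f 4 μ) (hg : MemLp g 4 μ) :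
    (∫ ω, f ω ^ 2 ∂μ) * ∫ ω, g ω ^ 2 ∂μ ≤ (∫ ω, f ω ^ 4 ∂μ + ∫ ω, g ω ^ 4 ∂μ) / 2 := by
  nlinarith [sq_integral_sq_le_integral_pow_four hf, sq_integral_sq_le_integral_pow_four hg,
    sq_nonneg ((∫ ω, f ω ^ 2 ∂μ) - ∫ ω, g ω ^ 2 ∂μ)]

lemma ProbabilityTheory.IndepFun.integral_add_pow {X Y : Ω → ℝ} {n : ℕ} (hXY : IndepFun X Y μ)
    (hX : MemLp X n μ) (hY : MemLp Y n μ) :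
    ∫ ω, (X ω + Y ω) ^ n ∂μ =
      ∑ m ∈ range (n + 1), n.choose m * ((∫ ω, X ω ^ m ∂μ) * ∫ ω, Y ω ^ (n - m) ∂μ) := by
  have hpow : ∀ m ∈ range (n + 1), IndepFun (fun ω => X ω ^ m) (fun ω => Y ω ^ (n - m)) μ :=
    fun m _ => hXY.comp (measurable_id.pow_const m) (measurable_id.pow_const (n - m))
  simp_rw [add_pow]
  rw [integral_finsetSum]
  · refine sum_congr rfl fun m hm => ?_
    rw [← (hpow m hm).integral_fun_mul_eq_mul_integral (hX.1.pow m) (hY.1.pow (n - m)),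
      ← integral_const_mul]
    congr 1 with ω
    ring
  · intro m hm
    exact ((hpow m hm).integrable_mul (hX.integrable_pow (mem_range_succ_iff.1 hm))
      (hY.integrable_pow (Nat.sub_le n m))).mul_const _

lemma ProbabilityTheory.IndepFun.integral_add_pow_four {X Y : Ω → ℝ} (hXY : IndepFun X Y μ)
    (hX : MemLp X 4 μ) (hY : MemLp Y 4 μ) (hX0 : ∫ ω, X ω ∂μ = 0) (hY0 : ∫ ω, Y ω ∂μ = 0) :
    ∫ ω, (X ω + Y ω) ^ 4 ∂μ =
      ∫ ω, X ω ^ 4 ∂μ + 6 * ((∫ ω, X ω ^ 2 ∂μ) * ∫ ω, Y ω ^ 2 ∂μ) + ∫ ω, Y ω ^ 4 ∂μ := by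
  simp [hXY.integral_add_pow hX hY, sum_range_succ, hX0, hY0, Nat.choose, add_assoc, add_comm, add_left_comm]

end Moments

section IndependentSums

variable {Ω : Type*} [MeasurableSpace Ω] {μ : Measure Ω} [IsProbabilityMeasure μ]

lemma ProbabilityTheory.iIndepFun.integral_sum_sq {ι : Type*} {X : ι → Ω → ℝ}
    (hindep : iIndepFun X μ) (hX : ∀ i, MemLp (X i) 2 μ) (hX0 : ∀ i, ∫ ω, X i ω ∂μ = 0)
    (s : Finset ι) : ∫ ω, (∑ i ∈ s, X i ω) ^ 2 ∂μ = ∑ i ∈ s, ∫ ω, X i ω ^ 2 ∂μ := by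
  have hsum0 : ∫ ω, (∑ i ∈ s, X i) ω ∂μ = 0 := by
    simp [integral_finsetSum _ fun i _ => (hX i).integrable one_le_two, hX0]
  rw [← sum_congr rfl fun i _ => variance_of_integral_eq_zero (hX i).aemeasurable (hX0 i),
    ← IndepFun.variance_sum (fun i _ => hX i) fun i _ j _ hij => hindep.indepFun hij,
    variance_of_integral_eq_zero (memLp_finsetSum' s fun i _ => hX i).aemeasurable hsum0]
  simp

lemma ProbabilityTheory.iIndepFun.integral_sum_pow_four_le {ι : Type*} {X : ι → Ω → ℝ}
    (hindep : iIndepFun X μ) (hX : ∀ i, MemLp (X i) 4 μ) (hX0 : ∀ i, ∫ ω, X i ω ∂μ = 0)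
    {C : ℝ} (hC : ∀ i, ∫ ω, X i ω ^ 4 ∂μ ≤ C) (s : Finset ι) :
    ∫ ω, (∑ i ∈ s, X i ω) ^ 4 ∂μ ≤ 3 * C * #s ^ 2 := by
  classical
  induction s using Finset.induction_on with
  | empty => simp
  | insert a s has ih =>
    have hT : MemLp (fun ω => ∑ i ∈ s, X i ω) 4 μ := memLp_finsetSum s fun i _ => hX i
    have hT0 : ∫ ω, ∑ i ∈ s, X i ω ∂μ = 0 := by
      simp [integral_finsetSum _ fun i _ => (hX i).integrable (by norm_num), hX0]
    have hindep_aT : IndepFun (X a) (fun ω => ∑ i ∈ s, X i ω) μ := by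
      simpa [Finset.sum_fn] using (hindep.indepFun_finsetSum_of_notMem₀
        (fun i => (hX i).aemeasurable) has).symm
    have hcross : (∫ ω, X a ω ^ 2 ∂μ) * ∫ ω, (∑ i ∈ s, X i ω) ^ 2 ∂μ ≤ #s * C := by
      rw [hindep.integral_sum_sq (fun i => (hX i).mono_exponent (by norm_num)) hX0, mul_sum,
        ← nsmul_eq_mul]
      refine sum_le_card_nsmul _ _ _ fun i _ => ?_
      linarith [integral_sq_mul_integral_sq_le (hX a) (hX i), hC a, hC i]
    have hC0 : 0 ≤ C := (integral_nonneg fun ω => by positivity).trans (hC a)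
    simp_rw [sum_insert has]
    rw [hindep_aT.integral_add_pow_four (hX a) hT (hX0 a) hT0, card_insert_of_notMem has]
    push_cast
    nlinarith [hC a]

lemma ProbabilityTheory.iIndepFun.ae_tendsto_sum_Icc_div_of_integral_pow_four_le
    {X : ℕ → Ω → ℝ} (hindep : iIndepFun X μ) (hX : ∀ i, MemLp (X i) 4 μ)
    (hX0 : ∀ i, ∫ ω, X i ω ∂μ = 0) {C : ℝ} (hC : ∀ i, ∫ ω, X i ω ^ 4 ∂μ ≤ C) :
    ∀ᵐ ω ∂μ, Tendsto (fun n : ℕ => (∑ i ∈ Icc 1 n, X i ω) / n) atTop (𝓝 0) := by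
  have hS n : MemLp (fun ω => (∑ i ∈ Icc 1 n, X i ω) / n) 4 μ := by
    simpa only [div_eq_mul_inv] using (memLp_finsetSum _ fun i _ => hX i).mul_const _
  have hmoment n : ∫ ω, ‖(∑ i ∈ Icc 1 n, X i ω) / n‖ ^ 4 ∂μ ≤ 3 * C * ((n : ℝ) ^ 2)⁻¹ := by
    have hbound := hindep.integral_sum_pow_four_le hX hX0 hC (Icc 1 n)
    simp only [Nat.card_Icc, add_tsub_cancel_right] at hbound
    simp only [norm_div, div_pow, Real.norm_eq_abs, Even.pow_abs (by decide : Even 4),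
      integral_div]
    rcases Nat.eq_zero_or_pos n with rfl | hn
    · simp
    rw [div_le_iff₀ (by positivity)]
    refine hbound.trans_eq ?_
    field_simp
  refine ae_tendsto_zero_of_summable_integral_norm_pow four_ne_zero
    (fun n => (hS n).integrable_norm_pow') ?_
  refine .of_nonneg_of_le (fun n => integral_nonneg fun ω => by positivity) hmoment ?_
  exact (Real.summable_nat_pow_inv.2 one_lt_two).mul_left _

end IndependentSums

/-- **Cantelli's strong law of large numbers.**
If `Y 1, Y 2, ...` are independent real random variables with uniformly bounded
fourth central moments (`E[|Y n - E[Y n]|^4] ≤ C`), then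
`(S n - E[S n]) / n → 0` almost surely, where `S n = Y 1 + ... + Y n`. -/
theorem cantelli_strong_law_of_large_numbers
    {Ω : Type*} [MeasurableSpace Ω] (P : Measure Ω) [IsProbabilityMeasure P]
    (Y : ℕ → Ω → ℝ) (C : ℝ)
    (hmeas : ∀ n, Measurable (Y n))
    (hindep : iIndepFun Y P)
    (hmom4 : ∀ n, Integrable (fun ω => (Y n ω) ^ 4) P)
    (hbound : ∀ n, ∫ ω, |Y n ω - ∫ ω', Y n ω' ∂P| ^ 4 ∂P ≤ C) :
    ∀ᵐ ω ∂P,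
      Tendsto
        (fun n : ℕ =>
          ((∑ i ∈ Finset.Icc 1 n, Y i ω) - ∫ ω', ∑ i ∈ Finset.Icc 1 n, Y i ω' ∂P) / n)
        atTop (nhds 0) := by
  set X : ℕ → Ω → ℝ := fun n ω => Y n ω - ∫ ω', Y n ω' ∂P
  have hY4 n : MemLp (Y n) 4 P :=
    (memLp_natCast_iff_integrable_pow (hmeas n).aestronglyMeasurable four_ne_zero).2 (hmom4 n)
  have hX4 n : MemLp (X n) 4 P := (hY4 n).sub (memLp_const _)
  have hXindep : iIndepFun X P := hindep.comp _ fun i => measurable_id.sub_const _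
  have hX0 n : ∫ ω, X n ω ∂P = 0 := by
    simp [X, integral_sub ((hY4 n).integrable (by norm_num)) (integrable_const _)]
  have hXC n : ∫ ω, X n ω ^ 4 ∂P ≤ C := by
    simpa [Even.pow_abs (by decide : Even 4)] using hbound n
  filter_upwards [hXindep.ae_tendsto_sum_Icc_div_of_integral_pow_four_le hX4 hX0 hXC] with ω hω
  refine hω.congr fun n => ?_
  rw [integral_finsetSum _ fun i _ => (hY4 i).integrable (by norm_num), ← sum_sub_distrib]
end

section
/- Let (X_i)_{i≥1} be independent real random variables such that for each i, X_i has probability density p_i and p_i ≺ p_{i+1} in the MLR order. Let F : ℝ^{m+1} → ℝ be continuous and nondecreasing in each of its arguments (with the other arguments fixed). Then for all n ≥ 1, m ≥ 0 and all real t, P( F(X_n, X_{n+1}, ..., X_{n+m}) ≥ t ) ≤ P( F(X_{n+1}, X_{n+2}, ..., X_{n+m+1}) ≥ t ). -/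
open MeasureTheory ProbabilityTheory
open scoped ENNReal

/-- A real random variable `X` has probability density `f` (w.r.t. Lebesgue). -/
def HasDensity {Ω : Type*} [MeasurableSpace Ω] (X : Ω → ℝ) (P : Measure Ω)
    (f : ℝ → ℝ) : Prop :=
  Measure.map X P = volume.withDensity (fun x => ENNReal.ofReal (f x))

/-!
The MLR order implies the usual stochastic order: when `∫ p = ∫ q = 1`,
`2 ∫ h p - 2 ∫ h q = ∬ (h x - h y) (p x q y - p y q x) dx dy`, and for nondecreasing `h` the
integrand is `≤ 0` as soon as `p ≺ q`. The stochastic order passes to products (Fubini) and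
to images under monotone maps. By independence the law of `(X_n, …, X_{n+m})` is the product
of the laws of its coordinates, each of which is MLR-below the corresponding coordinate of
`(X_{n+1}, …, X_{n+m+1})`, and `{F ≥ t}` is an upper set because `F` is monotone.
-/

/-- `p ≺ q`: the likelihood ratio `q / p` is nondecreasing. -/
def LikelihoodRatioLE {α β : Type*} [LE α] [Mul β] [LE β] (p q : α → β) : Prop :=
  ∀ x y, x ≤ y → p y * q x ≤ p x * q y

def StochasticallyLE {α : Type*} [MeasurableSpace α] [Preorder α] (μ ν : Measure α) : Prop :=
  ∀ g : α → ℝ≥0∞, Measurable g → Monotone g → ∫⁻ x, g x ∂μ ≤ ∫⁻ x, g x ∂ν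

lemma monotone_of_monotone_update {ι α β : Type*} [Fintype ι] [DecidableEq ι] [Preorder α]
    [Preorder β] {F : (ι → α) → β} (hF : ∀ i x, Monotone fun a => F (Function.update x i a)) :
    Monotone F := by
  intro x y hxy
  have partial_replacement : ∀ s : Finset ι, F x ≤ F (s.piecewise y x) := by
    intro s
    induction s using Finset.induction_on with
    | empty => simp
    | insert i s hi ih =>
      calc F x ≤ F (s.piecewise y x) := ih
        _ = F (Function.update (s.piecewise y x) i (x i)) := by
          rw [← Finset.piecewise_eq_of_notMem s y x hi, Function.update_eq_self]
        _ ≤ F (Function.update (s.piecewise y x) i (y i)) := hF i _ (hxy i)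
        _ = F ((insert i s).piecewise y x) := by rw [Finset.piecewise_insert]
  simpa using partial_replacement Finset.univ

lemma ENNReal.mul_add_mul_le_mul_add_mul {a b c d : ℝ≥0∞} (hab : a ≤ b) (hcd : c ≤ d) :
    a * d + b * c ≤ a * c + b * d := by
  obtain ⟨e, rfl⟩ := exists_add_of_le hcd
  calc a * (c + e) + b * c = (a * c + b * c) + a * e := by ring
    _ ≤ (a * c + b * c) + b * e := by gcongr
    _ = a * c + b * (c + e) := by ring

lemma LikelihoodRatioLE.ofReal {α : Type*} [LE α] {p q : α → ℝ} (hp : ∀ x, 0 ≤ p x)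
    (h : LikelihoodRatioLE p q) :
    LikelihoodRatioLE (fun x => ENNReal.ofReal (p x)) (fun x => ENNReal.ofReal (q x)) := by
  intro x y hxy
  rw [← ENNReal.ofReal_mul (hp y), ← ENNReal.ofReal_mul (hp x)]
  exact ENNReal.ofReal_le_ofReal (h x y hxy)

lemma LikelihoodRatioLE.stochasticallyLE_withDensity {α : Type*} [MeasurableSpace α]
    [LinearOrder α] {μ : Measure α} {p q : α → ℝ≥0∞} (hp : Measurable p) (hq : Measurable q)
    (hp1 : ∫⁻ x, p x ∂μ = 1) (hq1 : ∫⁻ x, q x ∂μ = 1) (hpq : LikelihoodRatioLE p q) :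
    StochasticallyLE (μ.withDensity p) (μ.withDensity q) := by
  intro h hh hmono
  rw [lintegral_withDensity_eq_lintegral_mul _ hp hh,
    lintegral_withDensity_eq_lintegral_mul _ hq hh]
  have symmetrize : ∀ {f g : α → ℝ≥0∞}, Measurable f → Measurable g → ∫⁻ x, g x ∂μ = 1 →
      ∫⁻ y, ∫⁻ x, (f x * h x * g y + f y * h y * g x) ∂μ ∂μ = 2 * ∫⁻ x, (f * h) x ∂μ := by
    intro f g hf hg hg1
    have hfh : Measurable fun x => f x * h x := hf.mul hh
    simp_rw [lintegral_add_left (hfh.mul_const _), lintegral_mul_const _ hfh,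
      lintegral_const_mul _ hg, hg1, mul_one, lintegral_add_left (hg.const_mul _),
      lintegral_const_mul _ hg, hg1, mul_one, two_mul, Pi.mul_apply]
  have rearrange : ∀ x y,
      p x * h x * q y + p y * h y * q x ≤ q x * h x * p y + q y * h y * p x := by
    intro x y
    wlog hxy : x ≤ y generalizing x y
    · rw [add_comm (p x * h x * q y), add_comm (q x * h x * p y)]
      exact this y x (le_of_not_ge hxy)
    calc p x * h x * q y + p y * h y * q x = h x * (p x * q y) + h y * (p y * q x) := by ring
      _ ≤ h x * (p y * q x) + h y * (p x * q y) :=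
        ENNReal.mul_add_mul_le_mul_add_mul (hmono hxy) (hpq x y hxy)
      _ = q x * h x * p y + q y * h y * p x := by ring
  have doubled : 2 * ∫⁻ x, (p * h) x ∂μ ≤ 2 * ∫⁻ x, (q * h) x ∂μ :=
    calc 2 * ∫⁻ x, (p * h) x ∂μ
        = ∫⁻ y, ∫⁻ x, (p x * h x * q y + p y * h y * q x) ∂μ ∂μ := (symmetrize hp hq hq1).symm
      _ ≤ ∫⁻ y, ∫⁻ x, (q x * h x * p y + q y * h y * p x) ∂μ ∂μ :=
        lintegral_mono fun y => lintegral_mono fun x => rearrange x y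
      _ = 2 * ∫⁻ x, (q * h) x ∂μ := symmetrize hq hp hp1
  exact (ENNReal.mul_le_mul_iff_right two_ne_zero ENNReal.ofNat_ne_top).1 doubled

namespace StochasticallyLE

variable {α β : Type*} [MeasurableSpace α] [MeasurableSpace β] [Preorder α] [Preorder β]

lemma measure_le {μ ν : Measure α} (h : StochasticallyLE μ ν) {s : Set α} (hs : IsUpperSet s)
    (hsm : MeasurableSet s) : μ s ≤ ν s := by
  have hmono : Monotone (s.indicator (1 : α → ℝ≥0∞)) := fun x y hxy =>
    Set.indicator_apply_le' (fun hx => (Set.indicator_of_mem (hs hxy hx) (1 : α → ℝ≥0∞)).ge)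
      fun _ => zero_le
  simpa only [lintegral_indicator_one hsm] using h _ (measurable_one.indicator hsm) hmono

lemma map {μ ν : Measure α} (h : StochasticallyLE μ ν) {f : α → β} (hf : Measurable f)
    (hmono : Monotone f) : StochasticallyLE (μ.map f) (ν.map f) := by
  intro g hg hgm
  rw [lintegral_map hg hf, lintegral_map hg hf]
  exact h _ (hg.comp hf) (hgm.comp hmono)

lemma prod {μ μ' : Measure α} {ν ν' : Measure β} [SFinite ν] [SFinite ν']
    (hμ : StochasticallyLE μ μ') (hν : StochasticallyLE ν ν') :
    StochasticallyLE (μ.prod ν) (μ'.prod ν') := by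
  intro g hg hmono
  rw [lintegral_prod _ hg.aemeasurable, lintegral_prod _ hg.aemeasurable]
  calc ∫⁻ a, ∫⁻ b, g (a, b) ∂ν ∂μ ≤ ∫⁻ a, ∫⁻ b, g (a, b) ∂ν' ∂μ :=
        lintegral_mono fun a =>
          hν _ (hg.comp measurable_prodMk_left) fun _ _ hb => hmono ⟨le_rfl, hb⟩
    _ ≤ ∫⁻ a, ∫⁻ b, g (a, b) ∂ν' ∂μ' :=
        hμ _ hg.lintegral_prod_right' fun _ _ ha => lintegral_mono fun _ => hmono ⟨ha, le_rfl⟩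

lemma pi : ∀ {n : ℕ} {μ ν : Fin n → Measure α} [∀ i, SigmaFinite (μ i)]
    [∀ i, SigmaFinite (ν i)], (∀ i, StochasticallyLE (μ i) (ν i)) →
    StochasticallyLE (Measure.pi μ) (Measure.pi ν)
  | 0, _, _, _, _, _ => by
    intro g _ _
    rw [Measure.pi_of_empty, Measure.pi_of_empty]
  | _ + 1, μ, ν, _, _, h => by
    rw [← (measurePreserving_piFinSuccAbove μ 0).symm.map_eq,
      ← (measurePreserving_piFinSuccAbove ν 0).symm.map_eq]
    exact ((h 0).prod (pi fun _ => h _)).map (MeasurableEquiv.measurable _)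
      (Fin.insertNthOrderIso (fun _ => α) 0).monotone

end StochasticallyLE

lemma HasDensity.lintegral_ofReal_eq_one {Ω : Type*} [MeasurableSpace Ω] {X : Ω → ℝ}
    {P : Measure Ω} [IsProbabilityMeasure P] {f : ℝ → ℝ} (hX : Measurable X)
    (h : HasDensity X P f) : ∫⁻ x, ENNReal.ofReal (f x) = 1 := by
  rw [← setLIntegral_univ, ← withDensity_apply _ MeasurableSet.univ, ← h,
    Measure.map_apply hX MeasurableSet.univ, Set.preimage_univ, measure_univ]

lemma ProbabilityTheory.iIndepFun.map_eq_pi_withDensity {Ω ι : Type*} [MeasurableSpace Ω] {P : Measure Ω}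
    {Y : ι → Ω → ℝ} {q : ι → ℝ → ℝ} (hY : ∀ i, Measurable (Y i)) (hindep : iIndepFun Y P)
    (hdens : ∀ i, HasDensity (Y i) P (q i)) {n : ℕ} {u : Fin n → ι} (hu : u.Injective) :
    P.map (fun ω j => Y (u j) ω) =
      Measure.pi fun j => volume.withDensity fun x => ENNReal.ofReal (q (u j) x) := by
  rw [(hindep.precomp hu).map_fun_eq_pi_map fun j => (hY _).aemeasurable]
  exact congrArg Measure.pi (funext fun j => hdens (u j))

theorem measure_le_of_likelihoodRatioLE {Ω ι : Type*} [MeasurableSpace Ω] {P : Measure Ω}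
    {Y : ι → Ω → ℝ} {q : ι → ℝ → ℝ} (hY : ∀ i, Measurable (Y i)) (hq : ∀ i, Measurable (q i))
    (hq_nonneg : ∀ i x, 0 ≤ q i x) (hindep : iIndepFun Y P)
    (hdens : ∀ i, HasDensity (Y i) P (q i)) {n : ℕ} {u v : Fin n → ι} (hu : u.Injective)
    (hv : v.Injective) (huv : ∀ j, LikelihoodRatioLE (q (u j)) (q (v j)))
    {S : Set (Fin n → ℝ)} (hS : IsUpperSet S) (hSm : MeasurableSet S) :
    P {ω | (fun j => Y (u j) ω) ∈ S} ≤ P {ω | (fun j => Y (v j) ω) ∈ S} := by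
  have := hindep.isProbabilityMeasure
  have hlaw_le : StochasticallyLE (P.map fun ω j => Y (u j) ω) (P.map fun ω j => Y (v j) ω) := by
    rw [hindep.map_eq_pi_withDensity hY hdens hu, hindep.map_eq_pi_withDensity hY hdens hv]
    refine StochasticallyLE.pi fun j => ((huv j).ofReal (hq_nonneg _)).stochasticallyLE_withDensity
      (hq _).ennreal_ofReal (hq _).ennreal_ofReal ?_ ?_
    exacts [(hdens _).lintegral_ofReal_eq_one (hY _), (hdens _).lintegral_ofReal_eq_one (hY _)]
  have hmeas : ∀ w : Fin n → ι, Measurable fun ω j => Y (w j) ω := fun w =>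
    measurable_pi_lambda _ fun j => hY (w j)
  have := hlaw_le.measure_le hS hSm
  rwa [Measure.map_apply (hmeas u) hSm, Measure.map_apply (hmeas v) hSm] at this

theorem monotone_function_stochastically_increasing_general
    {Ω : Type*} [MeasurableSpace Ω] (P : Measure Ω)
    (X : ℕ → Ω → ℝ) (p : ℕ → ℝ → ℝ)
    (hX_meas : ∀ i, Measurable (X i))
    (hp_meas : ∀ i, Measurable (p i))
    (hp_nonneg : ∀ i x, 0 ≤ p i x)
    (hindep : iIndepFun (fun i => X (i + 1)) P)
    (hdens : ∀ i : ℕ, HasDensity (X (i + 1)) P (p (i + 1)))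
    (hMLR : ∀ (i : ℕ) (x y : ℝ), x ≤ y → p i y * p (i + 1) x ≤ p i x * p (i + 1) y) :
    ∀ (m : ℕ) (F : (Fin (m + 1) → ℝ) → ℝ),
      Continuous F →
      (∀ (j : Fin (m + 1)) (x : Fin (m + 1) → ℝ) (a b : ℝ), a ≤ b →
        F (Function.update x j a) ≤ F (Function.update x j b)) →
      ∀ (n : ℕ), 1 ≤ n → ∀ (t : ℝ),
        P {ω | t ≤ F (fun j => X (n + (j : ℕ)) ω)}
          ≤ P {ω | t ≤ F (fun j => X (n + 1 + (j : ℕ)) ω)} := by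
  intro m F hF hF_update n hn t
  obtain ⟨k, rfl⟩ := Nat.exists_eq_add_of_le' hn
  have hS : IsUpperSet {x | t ≤ F x} := fun _ _ hxy hx =>
    hx.trans (monotone_of_monotone_update hF_update hxy)
  have hidx : ∀ j : ℕ, k + 1 + j = k + j + 1 := Nat.add_right_comm k 1
  have hidx' : ∀ j : ℕ, k + 1 + 1 + j = k + j + 1 + 1 := fun j => by omega
  simp only [hidx', hidx]
  exact measure_le_of_likelihoodRatioLE (fun i => hX_meas (i + 1)) (fun i => hp_meas (i + 1))
    (fun i => hp_nonneg (i + 1)) hindep hdens (u := fun j => k + j) (v := fun j => k + j + 1)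
    (fun _ _ h => Fin.ext (by simpa using h)) (fun _ _ h => Fin.ext (by simpa using h))
    (fun j => hMLR (k + j + 1)) hS (measurableSet_le measurable_const hF.measurable)

/-- **Stochastic monotonicity along an exploding process.**
Let `X 1, X 2, ...` (here `X (i+1)` is the `i`-th variable, `i ≥ 1`) be
independent with `X_i` of density `p_i`, where `p_i ≺ p_{i+1}` in the MLR order.
If `F : ℝ^{m+1} → ℝ` is continuous and nondecreasing in each argument, then
`P(F(X_n, ..., X_{n+m}) ≥ t) ≤ P(F(X_{n+1}, ..., X_{n+m+1}) ≥ t)`. -/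
theorem monotone_function_stochastically_increasing
    {Ω : Type*} [MeasurableSpace Ω] (P : Measure Ω) [IsProbabilityMeasure P]
    (X : ℕ → Ω → ℝ) (p : ℕ → ℝ → ℝ)
    (hX_meas : ∀ i, Measurable (X i))
    (hp_meas : ∀ i, Measurable (p i))
    (hp_nonneg : ∀ i x, 0 ≤ p i x)
    (hp_int : ∀ i, ∫ x, p i x = 1)
    (hindep : iIndepFun (fun i => X (i + 1)) P)
    (hdens : ∀ i : ℕ, HasDensity (X (i + 1)) P (p (i + 1)))
    (hMLR : ∀ (i : ℕ) (x y : ℝ), x ≤ y → p i y * p (i + 1) x ≤ p i x * p (i + 1) y) :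
    ∀ (m : ℕ) (F : (Fin (m + 1) → ℝ) → ℝ),
      Continuous F →
      (∀ (j : Fin (m + 1)) (x : Fin (m + 1) → ℝ) (a b : ℝ), a ≤ b →
        F (Function.update x j a) ≤ F (Function.update x j b)) →
      ∀ (n : ℕ), 1 ≤ n → ∀ (t : ℝ),
        P {ω | t ≤ F (fun j => X (n + (j : ℕ)) ω)}
          ≤ P {ω | t ≤ F (fun j => X (n + 1 + (j : ℕ)) ω)} :=
  monotone_function_stochastically_increasing_general P X p hX_meas hp_meas hp_nonneg hindep hdens
    hMLR
end

section
/- In the exploding change-point model (with g ≺ f_0 and f_m ≺ f_{m+1} in MLR order for all m, and continuous log-likelihood ratios x ↦ log(f_m(x)/g(x))), suppose there is I > 0 such that (1/n) Σ_{k=1}^n log( f_{k-1}(X_k) / g(X_k) ) → I almost surely under P_1. Then for every δ > 0, lim_{n→∞} sup_{k ≥ 1} P_1( (1/n) Σ_{i=k}^{k+n} log( f_{i-k}(X_i) / g(X_i) ) ≤ I − δ ) = 0. -/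
open MeasureTheory Filter ProbabilityTheory

/-!
MLR order is transitive between nonzero densities, so `g ≺ f m` and `f m ≺ f (κ + m)`. The first
makes the continuous log-likelihood ratio `L m = log (f m / g)` nondecreasing; the second makes
`f (κ + m)` stochastically larger than `f m`, so `L m (X (κ + m))` stochastically dominates
`L m (X m)`. Stochastic dominance is preserved under convolution, hence under sums of independent
variables, so each probability in the supremum is at most the one for `κ = 0`. That one tends to
`0`, since almost sure convergence implies convergence in probability.
-/

open Set Finset

theorem Continuous.monotone_of_monotoneOn_support {f : ℝ → ℝ} (hf : Continuous f)
    (hmono : MonotoneOn f (Function.support f)) : Monotone f := by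
  intro x y hxy
  by_contra! hlt
  rcases eq_or_ne (f x) 0 with hx | hx
  · obtain ⟨t, ⟨-, hty⟩, ht⟩ : f y / 2 ∈ f '' Icc x y :=
      intermediate_value_Icc' hxy hf.continuousOn ⟨by linarith, by linarith⟩
    have := hmono (by simp [ht]; linarith) (by simp; linarith) hty
    linarith
  rcases eq_or_ne (f y) 0 with hy | hy
  · obtain ⟨t, ⟨hxt, -⟩, ht⟩ : f x / 2 ∈ f '' Icc x y :=
      intermediate_value_Icc' hxy hf.continuousOn ⟨by linarith, by linarith⟩
    have := hmono hx (by simp [ht]; linarith) hxt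
    linarith
  exact hlt.not_ge (hmono hx hy hxy)

/-- The MLR order `p ≺ q` of the paper (`q / p` nondecreasing), written without division. -/
def MLRLe (p q : ℝ → ℝ) : Prop := ∀ x y : ℝ, x ≤ y → p y * q x ≤ p x * q y

namespace MLRLe

variable {p q r : ℝ → ℝ}

theorem refl (p : ℝ → ℝ) : MLRLe p p := fun _ _ _ => (mul_comm _ _).le

theorem trans (hpq : MLRLe p q) (hqr : MLRLe q r) (hp : ∀ x, 0 ≤ p x) (hq : ∀ x, 0 ≤ q x)
    (hr : ∀ x, 0 ≤ r x) (hq₀ : q ≠ 0) : MLRLe p r := by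
  intro x y hxy
  rcases (hr x).eq_or_lt with hrx | hrx
  · rw [← hrx, mul_zero]
    exact mul_nonneg (hp x) (hr y)
  rcases (hp y).eq_or_lt with hpy | hpy
  · rw [← hpy, zero_mul]
    exact mul_nonneg (hp x) (hr y)
  have hqx : 0 < q x := by
    by_contra! hqx
    have hq_right : ∀ z, x ≤ z → q z = 0 := fun z hz =>
      le_antisymm (nonpos_of_mul_nonpos_left (by nlinarith [hqr x z hz, hr z]) hrx) (hq z)
    obtain ⟨u, hu⟩ := Function.ne_iff.1 hq₀
    have hux : u < x := lt_of_not_ge fun h => hu (hq_right u h)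
    have := hpq u y (hux.le.trans hxy)
    rw [hq_right y hxy, mul_zero] at this
    exact this.not_gt (mul_pos hpy ((hq u).lt_of_ne' hu))
  have hqy : 0 < q y := by
    by_contra! hqy
    nlinarith [hpq x y hxy, hp x, mul_pos hpy hqx]
  refine le_of_mul_le_mul_right ?_ (mul_pos hqx hqy)
  calc p y * r x * (q x * q y) = (p y * q x) * (q y * r x) := by ring
    _ ≤ (p x * q y) * (q x * r y) :=
      mul_le_mul (hpq x y hxy) (hqr x y hxy) (by positivity) (mul_nonneg (hp x) hqy.le)
    _ = p x * r y * (q x * q y) := by ring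

theorem monotone_log_div (h : MLRLe p q) (hp : ∀ x, 0 ≤ p x) (hq : ∀ x, 0 ≤ q x)
    (hc : Continuous fun x => Real.log (q x / p x)) :
    Monotone fun x => Real.log (q x / p x) := by
  have hpos : ∀ x, Real.log (q x / p x) ≠ 0 → 0 < p x ∧ 0 < q x := fun x hx => by
    have hdiv : 0 < q x / p x :=
      (div_nonneg (hq x) (hp x)).lt_of_ne' fun h0 => hx (by rw [h0, Real.log_zero])
    rcases div_pos_iff.1 hdiv with ⟨hqx, hpx⟩ | ⟨hqx, -⟩
    · exact ⟨hpx, hqx⟩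
    · exact absurd hqx (hq x).not_gt
  -- Where `p` or `q` vanishes, `Real.log` takes the junk value `0`; continuity rules out that this
  -- breaks monotonicity.
  refine hc.monotone_of_monotoneOn_support fun x hx y hy hxy => ?_
  obtain ⟨hpx, hqx⟩ := hpos x hx
  obtain ⟨hpy, hqy⟩ := hpos y hy
  refine Real.log_le_log (div_pos hqx hpx) ((div_le_div_iff₀ hpx hpy).2 ?_)
  linarith [h x y hxy]

theorem measure_le_of_isLowerSet {μ ν : Measure ℝ} [IsProbabilityMeasure μ]
    [IsProbabilityMeasure ν]
    (h : MLRLe p q) (hp : ∀ x, 0 ≤ p x)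
    (hμ : μ = volume.withDensity fun x => ENNReal.ofReal (p x))
    (hν : ν = volume.withDensity fun x => ENNReal.ofReal (q x))
    {S : Set ℝ} (hS : MeasurableSet S) (hS_lower : IsLowerSet S) : ν S ≤ μ S := by
  -- Integrate `q x * p y ≤ p x * q y` over `x ∈ S`, `y ∉ S`.
  have hcross : ν S * μ Sᶜ ≤ μ S * ν Sᶜ := by
    rw [hμ, hν, withDensity_apply _ hS, withDensity_apply _ hS,
      ← lintegral_mul_const' _ _ (by rw [← hμ]; exact measure_ne_top _ _),
      ← lintegral_mul_const' _ _ (by rw [← hν]; exact measure_ne_top _ _)]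
    refine setLIntegral_mono' hS fun x hx => ?_
    rw [withDensity_apply _ hS.compl, withDensity_apply _ hS.compl,
      ← lintegral_const_mul' _ _ ENNReal.ofReal_ne_top,
      ← lintegral_const_mul' _ _ ENNReal.ofReal_ne_top]
    refine setLIntegral_mono' hS.compl fun y hy => ?_
    have hxy : x ≤ y := le_of_not_ge fun hyx => hy (hS_lower hyx hx)
    rw [← ENNReal.ofReal_mul' (hp y), ← ENNReal.ofReal_mul (hp x)]
    exact ENNReal.ofReal_le_ofReal (by linarith [h x y hxy])
  calc ν S = ν S * (μ S + μ Sᶜ) := by rw [measure_add_measure_compl hS, measure_univ, mul_one]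
    _ = ν S * μ S + ν S * μ Sᶜ := mul_add _ _ _
    _ ≤ ν S * μ S + μ S * ν Sᶜ := by gcongr
    _ = μ S * (ν S + ν Sᶜ) := by ring
    _ = μ S := by rw [measure_add_measure_compl hS, measure_univ, mul_one]

end MLRLe

theorem mlrLe_nat_of_le_succ {f : ℕ → ℝ → ℝ} (hf : ∀ m x, 0 ≤ f m x) (hf₀ : ∀ m, f m ≠ 0)
    (h : ∀ m, MLRLe (f m) (f (m + 1))) {m m' : ℕ} (hmm' : m ≤ m') : MLRLe (f m) (f m') := by
  induction m', hmm' using Nat.le_induction with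
  | base => exact MLRLe.refl _
  | succ k _ ih => exact ih.trans (h k) (hf m) (hf k) (hf (k + 1)) (hf₀ k)

namespace MeasureTheory.Measure

theorem conv_Iic_le_conv_Iic_right {ν μ μ' : Measure ℝ} [SFinite ν] [SFinite μ] [SFinite μ']
    (h : ∀ t, μ (Iic t) ≤ μ' (Iic t)) (c : ℝ) : (ν ∗ μ) (Iic c) ≤ (ν ∗ μ') (Iic c) := by
  have hpre : ∀ x : ℝ, Prod.mk x ⁻¹' ((fun z : ℝ × ℝ => z.1 + z.2) ⁻¹' Iic c) = Iic (c - x) :=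
    fun x => by ext y; simp [le_sub_iff_add_le']
  simp only [conv, map_apply measurable_add measurableSet_Iic,
    prod_apply (measurable_add measurableSet_Iic), hpre]
  exact lintegral_mono fun x => h (c - x)

theorem conv_Iic_le_conv_Iic {μ μ' ν ν' : Measure ℝ} [SFinite μ] [SFinite μ'] [SFinite ν]
    [SFinite ν'] (hμ : ∀ t, μ (Iic t) ≤ μ' (Iic t)) (hν : ∀ t, ν (Iic t) ≤ ν' (Iic t)) (c : ℝ) :
    (μ ∗ ν) (Iic c) ≤ (μ' ∗ ν') (Iic c) :=
  calc (μ ∗ ν) (Iic c) ≤ (μ ∗ ν') (Iic c) := conv_Iic_le_conv_Iic_right hν c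
    _ = (ν' ∗ μ) (Iic c) := by rw [conv_comm]
    _ ≤ (ν' ∗ μ') (Iic c) := conv_Iic_le_conv_Iic_right hμ c
    _ = (μ' ∗ ν') (Iic c) := by rw [conv_comm]

end MeasureTheory.Measure

theorem ProbabilityTheory.iIndepFun.map_sum_range_Iic_le {Ω Ω' : Type*} [MeasurableSpace Ω]
    [MeasurableSpace Ω'] {P : Measure Ω} {Q : Measure Ω'} [IsProbabilityMeasure P]
    [IsProbabilityMeasure Q] {Y : ℕ → Ω → ℝ} {Z : ℕ → Ω' → ℝ} (hY : iIndepFun Y P)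
    (hZ : iIndepFun Z Q) (hY_meas : ∀ j, Measurable (Y j)) (hZ_meas : ∀ j, Measurable (Z j))
    (h : ∀ j t, P.map (Y j) (Iic t) ≤ Q.map (Z j) (Iic t)) (n : ℕ) (t : ℝ) :
    P.map (∑ j ∈ range n, Y j) (Iic t) ≤ Q.map (∑ j ∈ range n, Z j) (Iic t) := by
  induction n generalizing t with
  | zero => simp [Pi.zero_def, Measure.map_const]
  | succ n ih =>
    rw [sum_range_succ, sum_range_succ,
      (hY.indepFun_finsetSum_of_notMem hY_meas notMem_range_self).map_add_eq_map_conv_map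
        (by fun_prop) (hY_meas n),
      (hZ.indepFun_finsetSum_of_notMem hZ_meas notMem_range_self).map_add_eq_map_conv_map
        (by fun_prop) (hZ_meas n)]
    exact Measure.conv_Iic_le_conv_Iic ih (h n) t

theorem Filter.Tendsto.succ_div_natCast {a : ℕ → ℝ} {l : ℝ}
    (h : Tendsto (fun n => a n / n) atTop (nhds l)) :
    Tendsto (fun n => a (n + 1) / n) atTop (nhds l) := by
  have hratio : Tendsto (fun n : ℕ => ((n : ℝ) / (n + 1))⁻¹) atTop (nhds 1) := by
    simpa using (tendsto_natCast_div_add_atTop (1 : ℝ)).inv₀ one_ne_zero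
  have := ((tendsto_add_atTop_iff_nat 1).2 h).mul hratio
  rw [mul_one] at this
  refine this.congr' ((eventually_ne_atTop 0).mono fun n hn => ?_)
  push_cast
  field_simp

theorem MeasureTheory.TendstoInMeasure.tendsto_measure_le_sub {Ω : Type*} [MeasurableSpace Ω]
    {P : Measure Ω} {Y : ℕ → Ω → ℝ} {l : ℝ} (h : TendstoInMeasure P Y atTop fun _ => l)
    {δ : ℝ} (hδ : 0 < δ) : Tendsto (fun n => P {ω | Y n ω ≤ l - δ}) atTop (nhds 0) := by
  refine tendsto_of_tendsto_of_tendsto_of_le_of_le tendsto_const_nhds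
    (tendstoInMeasure_iff_dist.1 h δ hδ) (fun n => zero_le) fun n => measure_mono fun ω hω => ?_
  simp only [Set.mem_ofPred_eq, Real.dist_eq] at hω ⊢
  linarith [neg_abs_le (Y n ω - l)]

theorem measure_sum_log_div_shift_le {Ω : Type*} [MeasurableSpace Ω] (P : Measure Ω)
    [IsProbabilityMeasure P] (X : ℕ → Ω → ℝ) (f : ℕ → ℝ → ℝ) (g : ℝ → ℝ)
    (hX_meas : ∀ j, Measurable (X j)) (hf_nonneg : ∀ m x, 0 ≤ f m x) (hg_nonneg : ∀ x, 0 ≤ g x)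
    (hf_int : ∀ m, ∫ x, f m x = 1) (hMLR0 : MLRLe g (f 0)) (hMLR : ∀ m, MLRLe (f m) (f (m + 1)))
    (hcont : ∀ m : ℕ, Continuous fun x => Real.log (f m x / g x)) (hindep : iIndepFun X P)
    (hdens : ∀ j : ℕ, HasDensity (X j) P (f j)) (n κ : ℕ) (c : ℝ) :
    P {ω | ∑ j ∈ range n, Real.log (f j (X (κ + j) ω) / g (X (κ + j) ω)) ≤ c}
      ≤ P {ω | ∑ j ∈ range n, Real.log (f j (X j ω) / g (X j ω)) ≤ c} := by
  set L : ℕ → ℝ → ℝ := fun m x => Real.log (f m x / g x)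
  have hL_meas : ∀ m, Measurable (L m) := fun m => (hcont m).measurable
  have hf₀ : ∀ m, f m ≠ 0 := fun m hm => by simpa [hm] using hf_int m
  have hchain : ∀ {m m'}, m ≤ m' → MLRLe (f m) (f m') :=
    mlrLe_nat_of_le_succ hf_nonneg hf₀ hMLR
  have hL_mono : ∀ m, Monotone (L m) := fun m =>
    (hMLR0.trans (hchain m.zero_le) hg_nonneg (hf_nonneg 0) (hf_nonneg m)
      (hf₀ 0)).monotone_log_div hg_nonneg (hf_nonneg m) (hcont m)
  have hevent : ∀ Y : ℕ → Ω → ℝ, (∀ j, Measurable (Y j)) →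
      P {ω | ∑ j ∈ range n, Y j ω ≤ c} = P.map (∑ j ∈ range n, Y j) (Iic c) := fun Y hY => by
    rw [Measure.map_apply (by fun_prop) measurableSet_Iic, sum_fn]
    rfl
  have hLX_meas : ∀ j m, Measurable (L j ∘ X m) := fun j m => (hL_meas j).comp (hX_meas m)
  refine (hevent _ fun j => hLX_meas j (κ + j)).trans_le
    (le_of_le_of_eq ?_ (hevent _ fun j => hLX_meas j j).symm)
  refine ((hindep.precomp (add_right_injective κ)).comp _ hL_meas).map_sum_range_Iic_le
    (hindep.comp _ hL_meas) (fun j => hLX_meas j (κ + j)) (fun j => hLX_meas j j)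
    (fun j t => ?_) n c
  have := Measure.isProbabilityMeasure_map (μ := P) (hX_meas j).aemeasurable
  have := Measure.isProbabilityMeasure_map (μ := P) (hX_meas (κ + j)).aemeasurable
  rw [← Measure.map_map (hL_meas j) (hX_meas _), ← Measure.map_map (hL_meas j) (hX_meas _),
    Measure.map_apply (hL_meas j) measurableSet_Iic,
    Measure.map_apply (hL_meas j) measurableSet_Iic]
  exact (hchain (Nat.le_add_left j κ)).measure_le_of_isLowerSet (hf_nonneg j) (hdens j)
    (hdens (κ + j)) (hL_meas j measurableSet_Iic) ((isLowerSet_Iic t).preimage (hL_mono j))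

theorem sup_prob_llr_average_le_tendsto_zero_general
    {Ω : Type*} [MeasurableSpace Ω] (P : Measure Ω) [IsProbabilityMeasure P]
    (X : ℕ → Ω → ℝ) (f : ℕ → ℝ → ℝ) (g : ℝ → ℝ) (I : ℝ)
    (hX_meas : ∀ j, Measurable (X j))
    (hf_nonneg : ∀ m x, 0 ≤ f m x) (hg_nonneg : ∀ x, 0 ≤ g x)
    (hf_int : ∀ m, ∫ x, f m x = 1)
    (hMLR0 : ∀ x y : ℝ, x ≤ y → g y * f 0 x ≤ g x * f 0 y)
    (hMLR : ∀ (m : ℕ) (x y : ℝ), x ≤ y → f m y * f (m + 1) x ≤ f m x * f (m + 1) y)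
    (hcont : ∀ m : ℕ, Continuous fun x => Real.log (f m x / g x))
    (hindep : iIndepFun X P)
    (hdens : ∀ j : ℕ, HasDensity (X j) P (f j))
    (hllr : ∀ᵐ ω ∂P,
      Tendsto (fun n : ℕ =>
          (∑ j ∈ Finset.range n, Real.log (f j (X j ω) / g (X j ω))) / n)
        atTop (nhds I)) :
    ∀ δ : ℝ, 0 < δ →
      Tendsto (fun n : ℕ =>
          ⨆ κ : ℕ,
            P {ω | (∑ j ∈ Finset.range (n + 1),
                Real.log (f j (X (κ + j) ω) / g (X (κ + j) ω))) / n ≤ I - δ})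
        atTop (nhds 0) := by
  intro δ hδ
  have hL_meas : ∀ m, Measurable fun x => Real.log (f m x / g x) := fun m => (hcont m).measurable
  have hS_meas : ∀ n : ℕ, Measurable fun ω =>
      (∑ j ∈ Finset.range (n + 1), Real.log (f j (X j ω) / g (X j ω))) / n := fun n =>
    (Finset.measurable_sum _ fun j _ => (hL_meas j).comp (hX_meas j)).div_const _
  have hlim : Tendsto (fun n : ℕ => P {ω | (∑ j ∈ Finset.range (n + 1),
      Real.log (f j (X j ω) / g (X j ω))) / n ≤ I - δ}) atTop (nhds 0) :=
    (tendstoInMeasure_of_tendsto_ae (fun n => (hS_meas n).aestronglyMeasurable)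
      (hllr.mono fun ω hω => hω.succ_div_natCast)).tendsto_measure_le_sub hδ
  refine tendsto_of_tendsto_of_tendsto_of_le_of_le' tendsto_const_nhds hlim
    (Eventually.of_forall fun n => zero_le) ?_
  filter_upwards [eventually_gt_atTop 0] with n hn
  refine iSup_le fun κ => ?_
  simp only [div_le_iff₀ (Nat.cast_pos.2 hn : (0 : ℝ) < n)]
  exact measure_sum_log_div_shift_le P X f g hX_meas hf_nonneg hg_nonneg hf_int hMLR0 hMLR hcont
    hindep hdens (n + 1) κ _

/-- In the exploding change-point model (`g ≺ f 0 ≺ f 1 ≺ ...` in MLR order,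
continuous log-likelihood ratios), under `P_1` (here `X j`, the observation at time
`j + 1`, has density `f j`, and the observations are independent), if
`(1/n) Σ_{k=1}^n log(f_{k-1}(X_k)/g(X_k)) → I > 0` almost surely, then for every
`δ > 0`, `sup_{k ≥ 1} P_1((1/n) Σ_{i=k}^{k+n} log(f_{i-k}(X_i)/g(X_i)) ≤ I - δ) → 0`
as `n → ∞` (below `κ = k - 1`). -/
theorem sup_prob_llr_average_le_tendsto_zero
    {Ω : Type*} [MeasurableSpace Ω] (P : Measure Ω) [IsProbabilityMeasure P]
    (X : ℕ → Ω → ℝ) (f : ℕ → ℝ → ℝ) (g : ℝ → ℝ) (I : ℝ)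
    (hX_meas : ∀ j, Measurable (X j))
    (hf_meas : ∀ m, Measurable (f m)) (hg_meas : Measurable g)
    (hf_nonneg : ∀ m x, 0 ≤ f m x) (hg_nonneg : ∀ x, 0 ≤ g x)
    (hf_int : ∀ m, ∫ x, f m x = 1) (hg_int : ∫ x, g x = 1)
    (hMLR0 : ∀ x y : ℝ, x ≤ y → g y * f 0 x ≤ g x * f 0 y)
    (hMLR : ∀ (m : ℕ) (x y : ℝ), x ≤ y → f m y * f (m + 1) x ≤ f m x * f (m + 1) y)
    (hcont : ∀ m : ℕ, Continuous fun x => Real.log (f m x / g x))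
    (hindep : iIndepFun X P)
    (hdens : ∀ j : ℕ, HasDensity (X j) P (f j))
    (hI : 0 < I)
    (hllr : ∀ᵐ ω ∂P,
      Tendsto (fun n : ℕ =>
          (∑ j ∈ Finset.range n, Real.log (f j (X j ω) / g (X j ω))) / n)
        atTop (nhds I)) :
    ∀ δ : ℝ, 0 < δ →
      Tendsto (fun n : ℕ =>
          ⨆ κ : ℕ,
            P {ω | (∑ j ∈ Finset.range (n + 1),
                Real.log (f j (X (κ + j) ω) / g (X (κ + j) ω))) / n ≤ I - δ})
        atTop (nhds 0) :=
  sup_prob_llr_average_le_tendsto_zero_general P X f g I hX_meas hf_nonneg hg_nonneg hf_int hMLR0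
    hMLR hcont hindep hdens hllr
end

section
/- Let (X_i)_{i≥1} be i.i.d. real random variables with common probability density g, with g > 0 Lebesgue-almost everywhere, and let {f_m}_{m≥0} be probability densities on ℝ. Define the Shiryaev–Roberts-type statistic R_n = Σ_{k=1}^n Π_{i=k}^n ( f_{i-k}(X_i) / g(X_i) ). Then the process (R_n − n)_{n≥1} is a martingale with respect to the natural filtration of (X_i) under this i.i.d. measure; in particular E[R_n] = n for all n. -/
open MeasureTheory ProbabilityTheory

/-!
Write `Λ m j = f m (X j) / g (X j)`. Because `X j` has density `g > 0`, each `Λ m j` has mean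
`∫ f m = 1`, and by independence `E[Λ m (n + 1) | ℱ n] = 1`. Splitting off the last factor of
every product gives
`R (n + 1) = Σ_{κ ≤ n} (∏_{κ ≤ j ≤ n} Λ (j - κ) j) · Λ (n + 1 - κ) (n + 1) + Λ 0 (n + 1)`,
and pulling out the `ℱ n`-measurable products yields `E[R (n + 1) | ℱ n] = R n + 1`. The means
`E[R n] = n` need no martingale argument: a product of independent unit-mean factors has mean one.
-/

open Filter Finset

namespace ProbabilityTheory

variable {Ω ι : Type*} [MeasurableSpace Ω] {μ : Measure Ω} {Y : ι → Ω → ℝ}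

lemma iIndepFun.integrable_fun_finsetProd (hY : iIndepFun Y μ)
    (hY_int : ∀ j, Integrable (Y j) μ) (s : Finset ι) :
    Integrable (fun ω => ∏ j ∈ s, Y j ω) μ := by
  classical
  induction s using Finset.induction_on with
  | empty => have := hY.isProbabilityMeasure; simp
  | @insert i s hi ih =>
    have hindep : IndepFun (∏ j ∈ s, Y j) (Y i) μ :=
      hY.indepFun_finsetProd_of_notMem₀ (fun j => (hY_int j).aemeasurable) hi
    simp_rw [prod_insert hi, mul_comm (Y i _)]
    have := hindep.integrable_mul (by simpa only [← prod_fn] using ih) (hY_int i)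
    simpa only [Pi.mul_def, prod_apply] using this

lemma iIndepFun.integral_fun_finsetProd (hY : iIndepFun Y μ)
    (hY_meas : ∀ j, AEStronglyMeasurable (Y j) μ) (s : Finset ι) :
    ∫ ω, ∏ j ∈ s, Y j ω ∂μ = ∏ j ∈ s, ∫ ω, Y j ω ∂μ := by
  have h := (hY.precomp Subtype.val_injective).integral_fun_prod_eq_prod_integral
    fun j : s => hY_meas j
  simp only [univ_eq_attach] at h
  rw [← prod_attach s, ← h]
  exact integral_congr_ae (.of_forall fun ω => (prod_attach s fun j => Y j ω).symm)

lemma iIndepFun.condExp_natural_comp_ae_eq_of_lt {β : Type*} [LinearOrder ι]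
    [MeasurableSpace β] [NormedAddCommGroup β] [BorelSpace β]
    {X : ι → Ω → β} (hX : ∀ i, StronglyMeasurable (X i)) (hX_indep : iIndepFun X μ) {i j : ι}
    (hij : i < j) {φ : β → ℝ} (hφ : Measurable φ) :
    μ[fun ω => φ (X j ω) | Filtration.natural X hX i] =ᵐ[μ] fun _ => ∫ ω, φ (X j ω) ∂μ := by
  have := hX_indep.isProbabilityMeasure
  exact condExp_indep_eq (hX j).measurable.comap_le (Filtration.le _ _)
    (hφ.comp (comap_measurable (X j))).stronglyMeasurable
    (hX_indep.indep_comap_natural_of_lt hX hij)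

end ProbabilityTheory

section Density

lemma toReal_ofReal_smul_div_ae_eq {α : Type*} [MeasurableSpace α] {μ : Measure α} {g : α → ℝ}
    (hg_pos : ∀ᵐ x ∂μ, 0 < g x) (φ : α → ℝ) :
    (fun x => (ENNReal.ofReal (g x)).toReal • (φ x / g x)) =ᵐ[μ] φ := by
  filter_upwards [hg_pos] with x hx
  rw [ENNReal.toReal_ofReal hx.le, smul_eq_mul, mul_div_cancel₀ _ hx.ne']

variable {Ω : Type*} [MeasurableSpace Ω] {P : Measure Ω} {X : Ω → ℝ} {g φ : ℝ → ℝ}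

lemma HasDensity.integrable_comp_div (hd : HasDensity X P g) (hX : Measurable X)
    (hg : Measurable g) (hg_pos : ∀ᵐ x, 0 < g x) (hφ_int : Integrable φ) :
    Integrable (fun ω => φ (X ω) / g (X ω)) P := by
  have : Integrable (fun x => φ x / g x) (P.map X) := by
    rw [hd, integrable_withDensity_iff_integrable_smul' (by fun_prop)
      (.of_forall fun _ => ENNReal.ofReal_lt_top)]
    exact hφ_int.congr (toReal_ofReal_smul_div_ae_eq hg_pos φ).symm
  exact this.comp_measurable hX

lemma HasDensity.integral_comp_div (hd : HasDensity X P g) (hX : Measurable X)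
    (hg : Measurable g) (hg_pos : ∀ᵐ x, 0 < g x) (hφ : Measurable φ) :
    ∫ ω, φ (X ω) / g (X ω) ∂P = ∫ x, φ x := by
  rw [← integral_map (f := fun x => φ x / g x) hX.aemeasurable (hφ.div hg).aestronglyMeasurable, hd,
    integral_withDensity_eq_integral_toReal_smul (by fun_prop)
      (.of_forall fun _ => ENNReal.ofReal_lt_top)]
  exact integral_congr_ae (toReal_ofReal_smul_div_ae_eq hg_pos φ)

end Density

section ShiryaevRoberts

variable {Ω : Type*} {m0 : MeasurableSpace Ω} {μ : Measure Ω} {ℱ : Filtration ℕ m0}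
  {Λ : ℕ → ℕ → Ω → ℝ}

/-- `Λ m j` is the likelihood ratio of the observation at time `j` when the change occurred
`m` steps earlier; `κ` runs over the possible change times. -/
def shiryaevRoberts (Λ : ℕ → ℕ → Ω → ℝ) (n : ℕ) (ω : Ω) : ℝ :=
  ∑ κ ∈ range (n + 1), ∏ j ∈ Icc κ n, Λ (j - κ) j ω

lemma shiryaevRoberts_succ (Λ : ℕ → ℕ → Ω → ℝ) (n : ℕ) (ω : Ω) :
    shiryaevRoberts Λ (n + 1) ω =
      ∑ κ ∈ range (n + 1), (∏ j ∈ Icc κ n, Λ (j - κ) j ω) * Λ (n + 1 - κ) (n + 1) ω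
        + Λ 0 (n + 1) ω := by
  rw [shiryaevRoberts, sum_range_succ, Icc_self, prod_singleton, Nat.sub_self]
  congr 1
  refine sum_congr rfl fun κ hκ => prod_Icc_succ_top ?_ _
  have := mem_range.1 hκ
  omega

lemma stronglyMeasurable_prod_Icc (hadapt : ∀ m, StronglyAdapted ℱ (Λ m)) (κ n : ℕ) :
    StronglyMeasurable[ℱ n] fun ω => ∏ j ∈ Icc κ n, Λ (j - κ) j ω :=
  (Finset.measurable_prod _ fun j hj =>
    ((hadapt _ j).mono (ℱ.mono (mem_Icc.1 hj).2)).measurable).stronglyMeasurable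

lemma stronglyAdapted_shiryaevRoberts (hadapt : ∀ m, StronglyAdapted ℱ (Λ m)) :
    StronglyAdapted ℱ (shiryaevRoberts Λ) := fun n =>
  (Finset.measurable_sum _ fun κ _ =>
    (stronglyMeasurable_prod_Icc hadapt κ n).measurable).stronglyMeasurable

lemma condExp_shiryaevRoberts_succ (hadapt : ∀ m, StronglyAdapted ℱ (Λ m))
    (hΛ_int : ∀ m j, Integrable (Λ m j) μ)
    (hprod_int : ∀ κ n, Integrable (fun ω => ∏ j ∈ Icc κ n, Λ (j - κ) j ω) μ)
    (hcond : ∀ m n, μ[Λ m (n + 1) | ℱ n] =ᵐ[μ] 1) (n : ℕ) :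
    μ[shiryaevRoberts Λ (n + 1) | ℱ n] =ᵐ[μ] fun ω => shiryaevRoberts Λ n ω + 1 := by
  set T : ℕ → Ω → ℝ := fun κ ω => ∏ j ∈ Icc κ n, Λ (j - κ) j ω
  have hsplit : shiryaevRoberts Λ (n + 1) =
      ∑ κ ∈ range (n + 1), T κ * Λ (n + 1 - κ) (n + 1) + Λ 0 (n + 1) := by
    ext ω
    simp only [shiryaevRoberts_succ, Pi.add_apply, Finset.sum_apply, Pi.mul_apply, T]
  have hterm_int : ∀ κ ∈ range (n + 1), Integrable (T κ * Λ (n + 1 - κ) (n + 1)) μ := by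
    intro κ hκ
    refine (hprod_int κ (n + 1)).congr (.of_forall fun ω => ?_)
    exact prod_Icc_succ_top (by have := mem_range.1 hκ; omega) _
  have hterm : ∀ κ ∈ range (n + 1), μ[T κ * Λ (n + 1 - κ) (n + 1) | ℱ n] =ᵐ[μ] T κ := by
    intro κ hκ
    refine (condExp_mul_of_stronglyMeasurable_left (stronglyMeasurable_prod_Icc hadapt κ n)
      (hterm_int κ hκ) (hΛ_int _ _)).trans ?_
    filter_upwards [hcond (n + 1 - κ) n] with ω hω
    simp [hω, T]
  rw [hsplit]
  filter_upwards [condExp_add (integrable_finsetSum' _ hterm_int) (hΛ_int 0 (n + 1)) (ℱ n),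
    condExp_finsetSum hterm_int (ℱ n), (eventually_all_finset _).2 hterm, hcond 0 n]
    with ω h_add h_sum h_terms h_new
  rw [h_add, Pi.add_apply, h_sum, Finset.sum_apply, sum_congr rfl h_terms, h_new]
  rfl

theorem martingale_shiryaevRoberts_sub [IsFiniteMeasure μ] (hadapt : ∀ m, StronglyAdapted ℱ (Λ m))
    (hΛ_int : ∀ m j, Integrable (Λ m j) μ)
    (hprod_int : ∀ κ n, Integrable (fun ω => ∏ j ∈ Icc κ n, Λ (j - κ) j ω) μ)
    (hcond : ∀ m n, μ[Λ m (n + 1) | ℱ n] =ᵐ[μ] 1) :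
    Martingale (fun n ω => shiryaevRoberts Λ n ω - (n + 1)) ℱ μ := by
  have hSR_int : ∀ n, Integrable (shiryaevRoberts Λ n) μ := fun n =>
    integrable_finsetSum _ fun κ _ => hprod_int κ n
  refine martingale_nat (fun n => (stronglyAdapted_shiryaevRoberts hadapt n).sub
    stronglyMeasurable_const) (fun n => (hSR_int n).sub (integrable_const _)) fun n => ?_
  refine ((condExp_sub (hSR_int (n + 1)) (integrable_const _) (ℱ n)).trans ?_).symm
  filter_upwards [condExp_shiryaevRoberts_succ hadapt hΛ_int hprod_int hcond n] with ω hω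
  rw [Pi.sub_apply, hω, condExp_const (ℱ.le n)]
  push_cast
  ring

end ShiryaevRoberts

section Independent

variable {Ω β : Type*} {m0 : MeasurableSpace Ω} {μ : Measure Ω} [MeasurableSpace β]
  {X : ℕ → Ω → β} {φ : ℕ → β → ℝ}

theorem martingale_shiryaevRoberts_comp_sub [NormedAddCommGroup β] [BorelSpace β]
    (hX : ∀ j, StronglyMeasurable (X j))
    (hindep : iIndepFun X μ) (hφ : ∀ m, Measurable (φ m))
    (hφ_int : ∀ m j, Integrable (fun ω => φ m (X j ω)) μ)
    (hφ_one : ∀ m j, ∫ ω, φ m (X j ω) ∂μ = 1) :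
    Martingale (fun n ω => shiryaevRoberts (fun m j ω => φ m (X j ω)) n ω - (n + 1))
      (Filtration.natural X hX) μ := by
  have := hindep.isProbabilityMeasure
  refine martingale_shiryaevRoberts_sub
    (fun m j =>
      ((hφ m).comp (Filtration.stronglyAdapted_natural hX j).measurable).stronglyMeasurable)
    hφ_int (fun κ n => ?_) fun m n => ?_
  · exact (hindep.comp _ fun j => hφ (j - κ)).integrable_fun_finsetProd (fun j => hφ_int _ j) _
  · filter_upwards [hindep.condExp_natural_comp_ae_eq_of_lt hX n.lt_succ_self (hφ m)] with ω hω
    rw [hω, hφ_one, Pi.one_apply]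

theorem integral_shiryaevRoberts_comp (hindep : iIndepFun X μ) (hφ : ∀ m, Measurable (φ m))
    (hφ_int : ∀ m j, Integrable (fun ω => φ m (X j ω)) μ)
    (hφ_one : ∀ m j, ∫ ω, φ m (X j ω) ∂μ = 1) (n : ℕ) :
    ∫ ω, shiryaevRoberts (fun m j ω => φ m (X j ω)) n ω ∂μ = n + 1 := by
  have hrow_indep : ∀ κ, iIndepFun (fun j ω => φ (j - κ) (X j ω)) μ := fun κ =>
    hindep.comp _ fun j => hφ (j - κ)
  have hprod_one : ∀ κ ∈ range (n + 1), ∫ ω, ∏ j ∈ Icc κ n, φ (j - κ) (X j ω) ∂μ = 1 := by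
    intro κ _
    rw [(hrow_indep κ).integral_fun_finsetProd fun j => (hφ_int _ j).aestronglyMeasurable]
    exact prod_eq_one fun j _ => hφ_one _ j
  have hprod_int : ∀ κ ∈ range (n + 1),
      Integrable (fun ω => ∏ j ∈ Icc κ n, φ (j - κ) (X j ω)) μ := fun κ _ =>
    (hrow_indep κ).integrable_fun_finsetProd (fun j => hφ_int _ j) _
  unfold shiryaevRoberts
  rw [integral_finsetSum _ hprod_int, sum_congr rfl hprod_one]
  simp

end Independent

theorem shiryaev_roberts_martingale_general
    {Ω : Type*} [MeasurableSpace Ω] (P : Measure Ω)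
    (X : ℕ → Ω → ℝ) (f : ℕ → ℝ → ℝ) (g : ℝ → ℝ)
    (hX_meas : ∀ j, Measurable (X j))
    (hf_meas : ∀ m, Measurable (f m)) (hg_meas : Measurable g)
    (hf_int : ∀ m, ∫ x, f m x = 1)
    (hg_pos : ∀ᵐ x, 0 < g x)
    (hindep : iIndepFun X P)
    (hdens : ∀ j : ℕ, HasDensity (X j) P g) :
    Martingale
      (fun n ω =>
        (∑ κ ∈ Finset.range (n + 1),
            ∏ j ∈ Finset.Icc κ n, f (j - κ) (X j ω) / g (X j ω))
          - (n + 1 : ℝ))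
      (Filtration.natural X fun j => (hX_meas j).stronglyMeasurable) P
    ∧
    ∀ n : ℕ,
      ∫ ω, (∑ κ ∈ Finset.range (n + 1),
          ∏ j ∈ Finset.Icc κ n, f (j - κ) (X j ω) / g (X j ω)) ∂P
        = (n + 1 : ℝ) := by
  have hratio_meas : ∀ m, Measurable fun x => f m x / g x := fun m => (hf_meas m).div hg_meas
  have hratio_int : ∀ m j, Integrable (fun ω => f m (X j ω) / g (X j ω)) P := fun m j =>
    (hdens j).integrable_comp_div (hX_meas j) hg_meas hg_pos
      (.of_integral_ne_zero (by simp [hf_int]))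
  have hratio_one : ∀ m j, ∫ ω, f m (X j ω) / g (X j ω) ∂P = 1 := fun m j =>
    ((hdens j).integral_comp_div (hX_meas j) hg_meas hg_pos (hf_meas m)).trans (hf_int m)
  exact ⟨martingale_shiryaevRoberts_comp_sub (φ := fun m x => f m x / g x) _ hindep hratio_meas
    hratio_int hratio_one,
    integral_shiryaevRoberts_comp (φ := fun m x => f m x / g x) hindep hratio_meas hratio_int
      hratio_one⟩

/-- **The Shiryaev–Roberts-type statistic minus `n` is a martingale.**
Let `X j` (the observation at time `j + 1`) be i.i.d. with density `g > 0` a.e.,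
and let `R n = Σ_{k=1}^n Π_{i=k}^n f_{i-k}(X_i)/g(X_i)` (below indices are shifted
by one: `κ = k - 1`, `j = i - 1`). Then `(R n - n)_{n ≥ 1}` is a martingale with
respect to the natural filtration of `(X j)`, and in particular `E[R n] = n`. -/
theorem shiryaev_roberts_martingale
    {Ω : Type*} [MeasurableSpace Ω] (P : Measure Ω) [IsProbabilityMeasure P]
    (X : ℕ → Ω → ℝ) (f : ℕ → ℝ → ℝ) (g : ℝ → ℝ)
    (hX_meas : ∀ j, Measurable (X j))
    (hf_meas : ∀ m, Measurable (f m)) (hg_meas : Measurable g)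
    (hf_nonneg : ∀ m x, 0 ≤ f m x) (hg_nonneg : ∀ x, 0 ≤ g x)
    (hf_int : ∀ m, ∫ x, f m x = 1) (hg_int : ∫ x, g x = 1)
    (hg_pos : ∀ᵐ x, 0 < g x)
    (hindep : iIndepFun X P)
    (hdens : ∀ j : ℕ, HasDensity (X j) P g) :
    Martingale
      (fun n ω =>
        (∑ κ ∈ Finset.range (n + 1),
            ∏ j ∈ Finset.Icc κ n, f (j - κ) (X j ω) / g (X j ω))
          - (n + 1 : ℝ))
      (Filtration.natural X fun j => (hX_meas j).stronglyMeasurable) P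
    ∧
    ∀ n : ℕ,
      ∫ ω, (∑ κ ∈ Finset.range (n + 1),
          ∏ j ∈ Finset.Icc κ n, f (j - κ) (X j ω) / g (X j ω)) ∂P
        = (n + 1 : ℝ) :=
  shiryaev_roberts_martingale_general P X f g hX_meas hf_meas hg_meas hf_int hg_pos hindep hdens
end

section
/- Let 0 ≤ μ_n be a nondecreasing sequence with μ_n → μ, and let (X_k)_{k≥1} be independent random variables with X_k ~ N(μ_{k-1}, 1). Then (1/n) Σ_{k=1}^n μ_{k-1} ( X_k − μ_{k-1}/2 ) → μ²/2 almost surely as n → ∞. -/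
/-! Centre the observations: `Z k = X k - μ k` are i.i.d. `N(0, 1)`, and
`μ k (X k - μ k / 2) = μlim Z k + (μ k - μlim) Z k + μ k ^ 2 / 2`.
The strong law makes the average of the first term tend to `0`, Cesàro makes the average of
the last tend to `μlim ^ 2 / 2`, and by Cauchy–Schwarz the average of the middle term is at
most `√(avg (μ k - μlim) ^ 2) · √(avg Z k ^ 2)`, where the first factor tends to `0` by Cesàro
and the second converges by the strong law applied to `Z k ^ 2`. -/

open MeasureTheory Filter ProbabilityTheory Real

/-- The density of the normal distribution `N(μ, 1)`. -/
noncomputable def normalPDF (μ x : ℝ) : ℝ :=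
  (Real.sqrt (2 * Real.pi))⁻¹ * Real.exp (-(x - μ) ^ 2 / 2)

open Finset

theorem Filter.Tendsto.cesaro_div {u : ℕ → ℝ} {l : ℝ} (h : Tendsto u atTop (nhds l)) :
    Tendsto (fun n : ℕ => (∑ k ∈ range n, u k) / n) atTop (nhds l) := by
  simpa only [div_eq_inv_mul] using h.cesaro

theorem tendsto_sum_mul_div_zero_of_sum_sq {b z : ℕ → ℝ} {c : ℝ}
    (hb : Tendsto (fun n : ℕ => (∑ k ∈ range n, b k ^ 2) / n) atTop (nhds 0))
    (hz : Tendsto (fun n : ℕ => (∑ k ∈ range n, z k ^ 2) / n) atTop (nhds c)) :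
    Tendsto (fun n : ℕ => (∑ k ∈ range n, b k * z k) / n) atTop (nhds 0) := by
  have hsq : Tendsto (fun n : ℕ => ((∑ k ∈ range n, b k * z k) / n) ^ 2) atTop (nhds 0) := by
    refine squeeze_zero (fun _ => sq_nonneg _) (fun n => ?_) (by simpa using hb.mul hz)
    rw [div_mul_div_comm, div_pow, ← sq]
    gcongr
    exact sum_mul_sq_le_sq_mul_sq _ _ _
  refine (tendsto_zero_iff_abs_tendsto_zero _).2 ?_
  simpa only [Function.comp_def, sqrt_sq_eq_abs, sqrt_zero] using hsq.sqrt

theorem hasLaw_gaussianReal_of_hasDensity {Ω : Type*} [MeasurableSpace Ω] {X : Ω → ℝ}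
    {P : Measure Ω} {m : ℝ} (h : HasDensity X P (normalPDF m)) :
    HasLaw X (gaussianReal m 1) P := by
  have hmap : P.map X = gaussianReal m 1 := by
    rw [h, gaussianReal_of_var_ne_zero _ one_ne_zero]
    congr 1
    funext x
    simp [normalPDF, gaussianPDF, gaussianPDFReal]
  refine ⟨?_, hmap⟩
  by_contra hX
  rw [Measure.map_of_not_aemeasurable hX] at hmap
  exact IsProbabilityMeasure.ne_zero _ hmap.symm

theorem strong_law_ae_comp_of_hasLaw {Ω : Type*} [MeasurableSpace Ω] {P : Measure Ω}
    {Z : ℕ → Ω → ℝ} {ν : Measure ℝ} {f : ℝ → ℝ} (hZ : ∀ k, HasLaw (Z k) ν P)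
    (hindep : Pairwise fun i j => IndepFun (Z i) (Z j) P) (hf : Measurable f)
    (hfint : Integrable f ν) :
    ∀ᵐ ω ∂P, Tendsto (fun n : ℕ => (∑ k ∈ range n, f (Z k ω)) / n) atTop
      (nhds (∫ x, f x ∂ν)) := by
  have hident : ∀ k, IdentDistrib (f ∘ Z k) (f ∘ Z 0) P P := fun k =>
    ((hZ k).identDistrib (hZ 0)).comp hf
  have hint : Integrable (f ∘ Z 0) P := by
    rw [← (hZ 0).map_eq] at hfint
    exact hfint.comp_aemeasurable (hZ 0).aemeasurable
  have hlim := strong_law_ae_real (fun k => f ∘ Z k) hint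
    (fun i j hij => (hindep hij).comp hf hf) hident
  rwa [(hZ 0).integral_comp hf.aestronglyMeasurable] at hlim

theorem gaussian_llr_average_tendsto_general
    {Ω : Type*} [MeasurableSpace Ω] (P : Measure Ω)
    (X : ℕ → Ω → ℝ) (μ : ℕ → ℝ) (μlim : ℝ)
    (hμ_lim : Tendsto μ atTop (nhds μlim))
    (hindep : iIndepFun X P)
    (hdens : ∀ k : ℕ, HasDensity (X k) P (normalPDF (μ k))) :
    ∀ᵐ ω ∂P,
      Tendsto
        (fun n : ℕ => (∑ k ∈ Finset.range n, μ k * (X k ω - μ k / 2)) / n)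
        atTop (nhds (μlim ^ 2 / 2)) := by
  set Z : ℕ → Ω → ℝ := fun k ω => X k ω - μ k
  have hZ : ∀ k, HasLaw (Z k) (gaussianReal 0 1) P := fun k => by
    simpa using gaussianReal_sub_const (hasLaw_gaussianReal_of_hasDensity (hdens k)) (μ k)
  have hZindep : Pairwise fun i j => IndepFun (Z i) (Z j) P := fun i j hij =>
    (hindep.indepFun hij).comp (measurable_sub_const _) (measurable_sub_const _)
  have hmean := strong_law_ae_comp_of_hasLaw hZ hZindep measurable_id
    ((memLp_id_gaussianReal (μ := 0) (v := 1) 1).integrable le_rfl)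
  have hsq := strong_law_ae_comp_of_hasLaw hZ hZindep (measurable_id.pow_const 2)
    (memLp_id_gaussianReal' (μ := 0) (v := 1) 2 (by norm_num)).integrable_sq
  have hdrift : Tendsto (fun n : ℕ => (∑ k ∈ range n, (μ k - μlim) ^ 2) / (n : ℝ)) atTop
      (nhds 0) := by
    simpa using ((hμ_lim.sub_const μlim).pow 2).cesaro_div
  have hbias : Tendsto (fun n : ℕ => (∑ k ∈ range n, μ k ^ 2 / 2) / (n : ℝ)) atTop
      (nhds (μlim ^ 2 / 2)) := ((hμ_lim.pow 2).div_const 2).cesaro_div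
  filter_upwards [hmean, hsq] with ω hmean hsq
  simp only [id, integral_id_gaussianReal] at hmean
  have hdev := tendsto_sum_mul_div_zero_of_sum_sq hdrift hsq
  have hlim := ((hmean.const_mul μlim).add hdev).add hbias
  rw [mul_zero, zero_add, zero_add] at hlim
  refine hlim.congr fun n => ?_
  rw [mul_div_assoc', ← add_div, ← add_div, mul_sum, ← sum_add_distrib, ← sum_add_distrib]
  congr 1
  refine sum_congr rfl fun k _ => ?_
  simp only [Z, id]
  ring

/-- **SLLN for the Gaussian exploding example.**
Let `0 ≤ μ n` be nondecreasing with `μ n → μlim`, and let `X k ~ N(μ (k-1), 1)`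
be independent (here `X k` denotes the `k`-th observation `X_{k+1}`, so
`X k ~ N(μ k, 1)` in the shifted indexing).  Then
`(1/n) Σ_{k=1}^n μ_{k-1}(X_k - μ_{k-1}/2) → μlim²/2` almost surely. -/
theorem gaussian_llr_average_tendsto
    {Ω : Type*} [MeasurableSpace Ω] (P : Measure Ω) [IsProbabilityMeasure P]
    (X : ℕ → Ω → ℝ) (μ : ℕ → ℝ) (μlim : ℝ)
    (hμ_nonneg : ∀ n, 0 ≤ μ n)
    (hμ_mono : Monotone μ)
    (hμ_lim : Tendsto μ atTop (nhds μlim))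
    (hX_meas : ∀ k, Measurable (X k))
    (hindep : iIndepFun X P)
    (hdens : ∀ k : ℕ, HasDensity (X k) P (normalPDF (μ k))) :
    ∀ᵐ ω ∂P,
      Tendsto
        (fun n : ℕ => (∑ k ∈ Finset.range n, μ k * (X k ω - μ k / 2)) / n)
        atTop (nhds (μlim ^ 2 / 2)) :=
  gaussian_llr_average_tendsto_general P X μ μlim hμ_lim hindep hdens
end
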